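/- arXiv:1707.00295 — 6 statements merged into one kernel-verified Lean document; each statement's English description precedes it below -/
import Mathlib

section
/- Let v₁, …, vₙ (n ≥ 2) be distinct points in ℝᵈ and let V be the n×n matrix with entries V_{ij} = ‖vᵢ − vⱼ‖². Then V has exactly one positive eigenvalue. -/
/-!
For `∑ xᵢ = 0` the quadratic form of the squared distance matrix is `-2 ‖∑ xᵢ vᵢ‖² ≤ 0`, so it is
negative semidefinite on a hyperplane. Two orthonormal eigenvectors with positive eigenvalues would
span a plane meeting that hyperplane in a nonzero vector on which the form is positive; hence there
is at most one positive eigenvalue. There is at least one, because the eigenvalues sum to the trace,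
which is `0`, and they are not all zero, since the matrix has a nonzero off-diagonal entry.
-/

open Matrix Finset

namespace Matrix.IsHermitian

variable {ι : Type*} [Fintype ι] [DecidableEq ι] {A : Matrix ι ι ℝ} (hA : A.IsHermitian)
include hA

lemma dotProduct_eigenvectorBasis (i j : ι) :
    ⇑(hA.eigenvectorBasis i) ⬝ᵥ ⇑(hA.eigenvectorBasis j) = if i = j then 1 else 0 := by
  rw [← orthonormal_iff_ite.mp hA.eigenvectorBasis.orthonormal i j,
    EuclideanSpace.inner_eq_star_dotProduct, dotProduct_comm]
  rfl

lemma dotProduct_mulVec_add_eigenvectorBasis {i j : ι} (hij : i ≠ j) (a b : ℝ) :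
    (a • ⇑(hA.eigenvectorBasis i) + b • ⇑(hA.eigenvectorBasis j)) ⬝ᵥ
        A *ᵥ (a • ⇑(hA.eigenvectorBasis i) + b • ⇑(hA.eigenvectorBasis j)) =
      a ^ 2 * hA.eigenvalues i + b ^ 2 * hA.eigenvalues j := by
  simp only [mulVec_add, mulVec_smul, hA.mulVec_eigenvectorBasis, add_dotProduct, dotProduct_add,
    smul_dotProduct, dotProduct_smul, hA.dotProduct_eigenvectorBasis, if_neg hij,
    if_neg hij.symm, if_true, smul_eq_mul]
  ring

theorem card_eigenvalues_pos_le_one_of_nonpos_on_hyperplane (w : ι → ℝ)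
    (hneg : ∀ x, w ⬝ᵥ x = 0 → x ⬝ᵥ A *ᵥ x ≤ 0) :
    #{i | 0 < hA.eigenvalues i} ≤ 1 := by
  refine card_le_one.mpr fun i hi j hj => by_contra fun hij => ?_
  simp only [mem_filter, mem_univ, true_and] at hi hj
  set s := w ⬝ᵥ ⇑(hA.eigenvectorBasis i)
  set t := w ⬝ᵥ ⇑(hA.eigenvectorBasis j)
  obtain ⟨a, b, hab, hperp⟩ : ∃ a b : ℝ, (a ≠ 0 ∨ b ≠ 0) ∧ a * s + b * t = 0 := by
    by_cases hs : s = 0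
    · exact ⟨1, 0, .inl one_ne_zero, by simp [hs]⟩
    · exact ⟨t, -s, .inr (neg_ne_zero.mpr hs), by ring⟩
  have hpos : 0 < a ^ 2 * hA.eigenvalues i + b ^ 2 * hA.eigenvalues j := by
    rcases hab with ha | hb
    · exact add_pos_of_pos_of_nonneg (by positivity) (by positivity)
    · exact add_pos_of_nonneg_of_pos (by positivity) (by positivity)
  refine hpos.not_ge ?_
  rw [← hA.dotProduct_mulVec_add_eigenvectorBasis hij]
  exact hneg _ (by simpa only [dotProduct_add, dotProduct_smul, smul_eq_mul] using hperp)

end Matrix.IsHermitian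

theorem Matrix.IsHermitian.exists_eigenvalues_pos_of_trace_eq_zero {𝕜 ι : Type*} [RCLike 𝕜]
    [Fintype ι] [DecidableEq ι] {A : Matrix ι ι 𝕜} (hA : A.IsHermitian) (htr : A.trace = 0)
    (hA0 : A ≠ 0) : ∃ i, 0 < hA.eigenvalues i := by
  by_contra! hnonpos
  have hsum : ∑ i, hA.eigenvalues i = 0 := by
    exact_mod_cast hA.trace_eq_sum_eigenvalues.symm.trans htr
  refine hA0 (hA.eigenvalues_eq_zero_iff.mp (funext fun i => ?_))
  exact (sum_eq_zero_iff_of_nonpos fun j _ => hnonpos j).mp hsum i (mem_univ i)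

section SqDistMatrix

variable {ι E : Type*} [NormedAddCommGroup E]

def sqDistMatrix (v : ι → E) : Matrix ι ι ℝ := Matrix.of fun i j => ‖v i - v j‖ ^ 2

lemma trace_sqDistMatrix [Fintype ι] (v : ι → E) : (sqDistMatrix v).trace = 0 := by
  simp [sqDistMatrix, trace]

lemma sqDistMatrix_ne_zero [Nontrivial ι] {v : ι → E} (hv : Function.Injective v) :
    sqDistMatrix v ≠ 0 := by
  obtain ⟨i, j, hij⟩ := exists_pair_ne ι
  intro h
  exact hij (hv (by simpa [sqDistMatrix, sub_eq_zero] using congr_fun₂ h i j))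

lemma dotProduct_sqDistMatrix_mulVec [Fintype ι] [InnerProductSpace ℝ E] (v : ι → E)
    {x : ι → ℝ} (hx : ∑ i, x i = 0) :
    x ⬝ᵥ sqDistMatrix v *ᵥ x = -2 * ‖∑ i, x i • v i‖ ^ 2 := by
  have hgram : ‖∑ i, x i • v i‖ ^ 2 = ∑ i, ∑ j, x i * x j * inner ℝ (v i) (v j) := by
    simp_rw [← real_inner_self_eq_norm_sq, sum_inner, inner_sum, real_inner_smul_left,
      real_inner_smul_right]
    exact sum_congr rfl fun i _ => sum_congr rfl fun j _ => by ring
  have hexpand : x ⬝ᵥ sqDistMatrix v *ᵥ x = (∑ i, x i * ‖v i‖ ^ 2) * ∑ j, x j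
      + (∑ i, x i) * (∑ j, x j * ‖v j‖ ^ 2) - 2 * ∑ i, ∑ j, x i * x j * inner ℝ (v i) (v j) := by
    simp only [dotProduct, mulVec, sqDistMatrix, of_apply, norm_sub_sq_real]
    rw [sum_mul_sum, sum_mul_sum, mul_sum, ← sum_add_distrib, ← sum_sub_distrib]
    refine sum_congr rfl fun i _ => ?_
    rw [mul_sum, mul_sum, ← sum_add_distrib, ← sum_sub_distrib]
    exact sum_congr rfl fun j _ => by ring
  rw [hexpand, hgram, hx]
  ring

end SqDistMatrix

theorem stmt0 (d n : ℕ) (hn : 2 ≤ n) (v : Fin n → EuclideanSpace ℝ (Fin d))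
    (hv : Function.Injective v)
    (V : Matrix (Fin n) (Fin n) ℝ) (hVdef : ∀ i j, V i j = ‖v i - v j‖ ^ 2)
    (hV : V.IsHermitian) :
    (Finset.univ.filter fun i => 0 < hV.eigenvalues i).card = 1 := by
  obtain rfl : V = sqDistMatrix v := Matrix.ext hVdef
  have : Nontrivial (Fin n) := Fin.nontrivial_iff_two_le.mpr hn
  obtain ⟨i, hi⟩ := hV.exists_eigenvalues_pos_of_trace_eq_zero (trace_sqDistMatrix v)
    (sqDistMatrix_ne_zero hv)
  refine le_antisymm (hV.card_eigenvalues_pos_le_one_of_nonpos_on_hyperplane 1 fun x hx => ?_)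
    (card_pos.mpr ⟨i, by simpa using hi⟩)
  rw [dotProduct_sqDistMatrix_mulVec v ((one_dotProduct x).symm.trans hx)]
  exact mul_nonpos_of_nonpos_of_nonneg (by norm_num) (sq_nonneg _)
end

section
/- Let V be an almost-equidistant set in ℝᵈ, i.e., among any three distinct points of V some two are at Euclidean distance exactly 1. Then for every point v ∈ V, the number of points u ∈ V \ {v} with ‖u − v‖ ≠ 1 is at most d + 1. -/
open scoped RealInnerProductSpace in
open Finset in
lemma equilateral_affineIndependent {E : Type*} [NormedAddCommGroup E]
    [InnerProductSpace ℝ E] {ι : Type*} {p : ι → E}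
    (h : ∀ i j, i ≠ j → dist (p i) (p j) = 1) : AffineIndependent ℝ p := by
  classical
  rw [affineIndependent_iff]
  intro s w hw hsum e he
  have key : ∀ i j : ι, (⟪p i, p j⟫) =
      (‖p i‖ ^ 2 + ‖p j‖ ^ 2 - if i = j then 0 else 1) / 2 := by
    intro i j
    by_cases hij : i = j
    · subst hij
      simp [real_inner_self_eq_norm_sq]
    · have hd : ‖p i - p j‖ = 1 := by rw [← dist_eq_norm]; exact h i j hij
      have h2 : ‖p i - p j‖ ^ 2 = 1 := by rw [hd]; norm_num
      rw [norm_sub_sq_real] at h2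
      simp only [hij, if_false]
      linarith
  set A := ∑ i ∈ s, w i * ‖p i‖ ^ 2 with hA
  have inner_i : ∀ i ∈ s, (∑ j ∈ s, w i * w j * ⟪p i, p j⟫)
      = w i * A / 2 + w i ^ 2 / 2 := by
    intro i hi
    have step : ∀ j ∈ s, w i * w j * ⟪p i, p j⟫ =
        (w i * ‖p i‖ ^ 2 / 2) * w j + (w i / 2) * (w j * ‖p j‖ ^ 2)
          - (w i / 2) * (w j * if i = j then 0 else 1) := by
      intro j _
      rw [key i j]
      ring
    rw [Finset.sum_congr rfl step]
    rw [Finset.sum_sub_distrib, Finset.sum_add_distrib, ← Finset.mul_sum,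
      ← Finset.mul_sum, ← Finset.mul_sum]
    have hite : (∑ j ∈ s, w j * if i = j then 0 else 1) = - w i := by
      have : ∀ j ∈ s, (w j * if i = j then 0 else 1)
          = w j - (if i = j then w j else 0) := by
        intro j _
        by_cases hij : i = j <;> simp [hij]
      rw [Finset.sum_congr rfl this, Finset.sum_sub_distrib, hw,
        Finset.sum_ite_eq, if_pos hi]
      ring
    rw [hite, hw, ← hA]
    ring
  have total : (∑ i ∈ s, ∑ j ∈ s, w i * w j * ⟪p i, p j⟫)
      = (1 / 2) * ∑ i ∈ s, w i ^ 2 := by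
    rw [Finset.sum_congr rfl inner_i, Finset.sum_add_distrib]
    have : ∑ i ∈ s, w i * A / 2 = (A / 2) * ∑ i ∈ s, w i := by
      rw [Finset.mul_sum]; exact Finset.sum_congr rfl fun i _ => by ring
    rw [this, hw, Finset.mul_sum]
    simp only [mul_zero, zero_add]
    exact Finset.sum_congr rfl fun i _ => by ring
  have zero : (∑ i ∈ s, ∑ j ∈ s, w i * w j * ⟪p i, p j⟫) = 0 := by
    have : (∑ i ∈ s, ∑ j ∈ s, w i * w j * ⟪p i, p j⟫)
        = ⟪∑ i ∈ s, w i • p i, ∑ j ∈ s, w j • p j⟫ := by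
      rw [sum_inner]
      refine Finset.sum_congr rfl fun i _ => ?_
      rw [inner_sum]
      refine Finset.sum_congr rfl fun j _ => ?_
      rw [real_inner_smul_left, real_inner_smul_right]
      ring
    rw [this, hsum, inner_zero_right]
  have hsq : ∑ i ∈ s, w i ^ 2 = 0 := by
    rw [total] at zero; linarith
  have := (Finset.sum_eq_zero_iff_of_nonneg fun i _ => sq_nonneg (w i)).mp hsq e he
  exact pow_eq_zero_iff (n := 2) (by norm_num) |>.mp this

open scoped Classical in
theorem stmt7 (d : ℕ) (V : Finset (EuclideanSpace ℝ (Fin d)))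
    (hae : ∀ x ∈ V, ∀ y ∈ V, ∀ z ∈ V, x ≠ y → y ≠ z → x ≠ z →
      dist x y = 1 ∨ dist y z = 1 ∨ dist x z = 1) :
    ∀ v ∈ V, (V.filter fun u => u ≠ v ∧ dist u v ≠ 1).card ≤ d + 1 := by
  intro v hv
  set S := V.filter fun u => u ≠ v ∧ dist u v ≠ 1 with hS
  have hdist : ∀ i j : ↥(S : Finset _), i ≠ j →
      dist (i : EuclideanSpace ℝ (Fin d)) (j : EuclideanSpace ℝ (Fin d)) = 1 := by
    rintro ⟨x, hx⟩ ⟨y, hy⟩ hne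
    simp only [hS, Finset.mem_filter] at hx hy
    have hxy : x ≠ y := fun h => hne (by simpa using h)
    rcases hae x hx.1 y hy.1 v hv hxy hy.2.1 hx.2.1 with h | h | h
    · exact h
    · exact absurd h hy.2.2
    · exact absurd h hx.2.2
  have hind : AffineIndependent ℝ (fun i : ↥(S : Finset _) =>
      (i : EuclideanSpace ℝ (Fin d))) := equilateral_affineIndependent hdist
  have hcard := hind.card_le_finrank_succ
  rw [Fintype.card_coe] at hcard
  calc S.card ≤ Module.finrank ℝ (vectorSpan ℝ (Set.range fun i : ↥(S : Finset _) =>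
        (i : EuclideanSpace ℝ (Fin d)))) + 1 := hcard
    _ ≤ Module.finrank ℝ (EuclideanSpace ℝ (Fin d)) + 1 := by
        gcongr; exact Submodule.finrank_le _
    _ = d + 1 := by rw [finrank_euclideanSpace_fin]
end

section
/- Any set of unit vectors in ℝᵈ such that among any three of them some two are orthogonal has cardinality at most 2d. -/
/-!
For a finite family `v` in a `d`-dimensional space, the frame operator `T = ∑ v vᵀ` satisfies
`tr T = ∑ ‖v‖²` and `tr T² = ∑_{v,w} ⟪v, w⟫²`, and Cauchy–Schwarz on its diagonal gives
`(tr T)² ≤ d · tr T²`. If the `v` are unit vectors and almost orthogonal, then for fixed `v` the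
vectors `w ≠ v` not orthogonal to `v` are pairwise orthogonal, so by Bessel's inequality
`∑_w ⟪v, w⟫² ≤ 1 + ‖v‖² = 2`. Hence `|S|² ≤ d · 2|S|`.
-/

open Finset Module RealInnerProductSpace

variable {E : Type*} [NormedAddCommGroup E] [InnerProductSpace ℝ E]

theorem sq_sum_norm_sq_le_finrank_mul_sum_sum_sq_inner [FiniteDimensional ℝ E] {ι : Type*}
    (s : Finset ι) (f : ι → E) :
    (∑ i ∈ s, ‖f i‖ ^ 2) ^ 2 ≤ finrank ℝ E * ∑ i ∈ s, ∑ j ∈ s, ⟪f i, f j⟫ ^ 2 := by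
  let b := stdOrthonormalBasis ℝ E
  -- the matrix of the frame operator `∑ i, f i ⊗ f i` in the basis `b`
  set F : Fin (finrank ℝ E) → Fin (finrank ℝ E) → ℝ :=
    fun k l => ∑ i ∈ s, ⟪b k, f i⟫ * ⟪b l, f i⟫ with hF
  have htrace : ∑ i ∈ s, ‖f i‖ ^ 2 = ∑ k, F k k := by
    simp_rw [hF, ← b.sum_sq_inner_right, sq]
    exact sum_comm
  have htrace_sq : ∑ i ∈ s, ∑ j ∈ s, ⟪f i, f j⟫ ^ 2 = ∑ k, ∑ l, F k l ^ 2 := by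
    calc ∑ i ∈ s, ∑ j ∈ s, ⟪f i, f j⟫ ^ 2
        = ∑ i ∈ s, ∑ j ∈ s, ∑ k, ∑ l,
            (⟪b k, f i⟫ * ⟪b l, f i⟫) * (⟪b k, f j⟫ * ⟪b l, f j⟫) := by
          refine sum_congr rfl fun i _ => sum_congr rfl fun j _ => ?_
          rw [← b.sum_inner_mul_inner, sq, sum_mul_sum]
          simp_rw [real_inner_comm (f i)]
          exact sum_congr rfl fun k _ => sum_congr rfl fun l _ => by ring
      _ = ∑ k, ∑ l, ∑ i ∈ s, ∑ j ∈ s,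
            (⟪b k, f i⟫ * ⟪b l, f i⟫) * (⟪b k, f j⟫ * ⟪b l, f j⟫) := by
          simp only [sum_comm (s := s) (t := univ)]
      _ = ∑ k, ∑ l, F k l ^ 2 := by simp_rw [hF, sq, sum_mul_sum]
  calc (∑ i ∈ s, ‖f i‖ ^ 2) ^ 2 = (∑ k, F k k) ^ 2 := by rw [htrace]
    _ ≤ finrank ℝ E * ∑ k, F k k ^ 2 := by
      simpa using sq_sum_le_card_mul_sum_sq (s := univ) (f := fun k => F k k)
    _ ≤ finrank ℝ E * ∑ k, ∑ l, F k l ^ 2 := by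
      gcongr with k
      exact single_le_sum (f := fun l => F k l ^ 2) (fun _ _ => sq_nonneg _) (mem_univ k)
    _ = finrank ℝ E * ∑ i ∈ s, ∑ j ∈ s, ⟪f i, f j⟫ ^ 2 := by rw [htrace_sq]

def AlmostOrthogonal (S : Finset E) : Prop :=
  ∀ x ∈ S, ∀ y ∈ S, ∀ z ∈ S, x ≠ y → y ≠ z → x ≠ z → ⟪x, y⟫ = 0 ∨ ⟪y, z⟫ = 0 ∨ ⟪x, z⟫ = 0

namespace AlmostOrthogonal

variable {S : Finset E}

theorem orthonormal_filter_inner_ne_zero [DecidableEq E] (hunit : ∀ v ∈ S, ‖v‖ = 1)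
    (hS : AlmostOrthogonal S) {v : E} (hv : v ∈ S) :
    Orthonormal ℝ ((↑) : {w ∈ S.erase v | ⟪v, w⟫ ≠ 0} → E) := by
  rw [orthonormal_iff_ite]
  rintro ⟨a, ha⟩ ⟨b, hb⟩
  simp only [mem_filter, mem_erase] at ha hb
  obtain ⟨⟨hav, haS⟩, hva⟩ := ha
  obtain ⟨⟨hbv, hbS⟩, hvb⟩ := hb
  by_cases hab : a = b
  · subst hab
    simp [hunit a haS]
  · rw [if_neg (by simpa using hab)]
    rcases hS a haS b hbS v hv hab hbv hav with h | h | h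
    · exact h
    · exact absurd (by rw [real_inner_comm, h]) hvb
    · exact absurd (by rw [real_inner_comm, h]) hva

theorem sum_sq_inner_le_two (hunit : ∀ v ∈ S, ‖v‖ = 1) (hS : AlmostOrthogonal S) {v : E}
    (hv : v ∈ S) : ∑ w ∈ S, ⟪v, w⟫ ^ 2 ≤ 2 := by
  classical
  have hbessel := (hS.orthonormal_filter_inner_ne_zero hunit hv).sum_inner_products_le
    (s := univ) v
  rw [hunit v hv, one_pow, sum_coe_sort _ fun w => ‖⟪w, v⟫‖ ^ 2] at hbessel
  simp only [Real.norm_eq_abs, sq_abs, real_inner_comm v] at hbessel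
  rw [sum_filter_of_ne fun w _ hw => by simpa using hw] at hbessel
  rw [← add_sum_erase S _ hv, real_inner_self_eq_norm_sq, hunit v hv]
  linarith

theorem sum_sum_sq_inner_le (hunit : ∀ v ∈ S, ‖v‖ = 1) (hS : AlmostOrthogonal S) :
    ∑ v ∈ S, ∑ w ∈ S, ⟪v, w⟫ ^ 2 ≤ 2 * #S :=
  (sum_le_sum fun _ hv => hS.sum_sq_inner_le_two hunit hv).trans_eq (by simp [mul_comm])

end AlmostOrthogonal

theorem stmt14 (d : ℕ) (S : Finset (EuclideanSpace ℝ (Fin d)))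
    (hunit : ∀ v ∈ S, ‖v‖ = 1)
    (horth : ∀ x ∈ S, ∀ y ∈ S, ∀ z ∈ S, x ≠ y → y ≠ z → x ≠ z →
      inner ℝ x y = (0 : ℝ) ∨ inner ℝ y z = (0 : ℝ) ∨ inner ℝ x z = (0 : ℝ)) :
    S.card ≤ 2 * d := by
  have hS : AlmostOrthogonal S := horth
  have hnorm : ∑ v ∈ S, ‖v‖ ^ 2 = #S := by
    rw [sum_congr rfl fun v hv => by rw [hunit v hv], sum_const, nsmul_eq_mul]
    simp
  have hsq : (#S : ℝ) ^ 2 ≤ d * (2 * #S) := by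
    calc (#S : ℝ) ^ 2 = (∑ v ∈ S, ‖v‖ ^ 2) ^ 2 := by rw [hnorm]
      _ ≤ d * ∑ v ∈ S, ∑ w ∈ S, ⟪v, w⟫ ^ 2 := by
        simpa using sq_sum_norm_sq_le_finrank_mul_sum_sum_sq_inner S id
      _ ≤ d * (2 * #S) := by gcongr; exact hS.sum_sum_sq_inner_le hunit
  have : (#S : ℝ) ≤ 2 * d := by nlinarith
  exact_mod_cast this
end

section
/- Fix an angle α with π/2 ≤ α < π and let c = cos α ≤ 0. Any finite set of unit vectors in ℝᵈ such that among any three of them some two have inner product exactly c has cardinality at most 2d + 2. -/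
/-!
Append the coordinate `√(-c)` to each vector: the Gram matrix `M` of the lifted vectors is positive
semidefinite of rank at most `d + 1`, has constant diagonal `t = 1 - c > 0`, and the angle condition
says that `M i j * M j k * M k i = 0` for distinct `i, j, k`. Hence `M - t • 1` has zero diagonal and
trace of its cube zero, which gives `tr M³ = 3t tr M² - 2nt³`. With `tr M = nt`, the Cauchy–Schwarz
inequality `(tr M²)² ≤ tr M · tr M³` for positive semidefinite `M` forces `tr M² ≤ 2nt²`, and
`(tr M)² ≤ rank M · tr M²` then yields `n ≤ 2 rank M ≤ 2d + 2`.
-/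

open Matrix Module

namespace Matrix

variable {n : Type*} [Fintype n] [DecidableEq n]

lemma IsHermitian.trace_pow_eq_sum_eigenvalues_pow {𝕜 : Type*} [RCLike 𝕜] {A : Matrix n n 𝕜}
    (hA : A.IsHermitian) (k : ℕ) : (A ^ k).trace = ∑ i, (hA.eigenvalues i : 𝕜) ^ k := by
  conv_lhs => rw [hA.spectral_theorem, ← map_pow, Unitary.conjStarAlgAut_apply, trace_mul_cycle,
    Unitary.coe_star_mul_self, Matrix.one_mul, diagonal_pow, trace_diagonal]
  rfl

lemma IsHermitian.trace_sq_le_rank_mul_trace_pow_two {A : Matrix n n ℝ} (hA : A.IsHermitian) :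
    A.trace ^ 2 ≤ A.rank * (A ^ 2).trace := by
  set T := Finset.univ.filter fun i => hA.eigenvalues i ≠ 0
  have hT : T.card = A.rank := by
    rw [hA.rank_eq_card_non_zero_eigs, Fintype.card_subtype]
  calc A.trace ^ 2 = (∑ i ∈ T, hA.eigenvalues i) ^ 2 := by
        rw [hA.trace_eq_sum_eigenvalues, Finset.sum_filter_ne_zero]; rfl
    _ ≤ T.card * ∑ i ∈ T, hA.eigenvalues i ^ 2 := sq_sum_le_card_mul_sum_sq
    _ ≤ A.rank * (A ^ 2).trace := by
        rw [hT, hA.trace_pow_eq_sum_eigenvalues_pow]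
        gcongr
        exact Finset.sum_le_sum_of_subset_of_nonneg (Finset.filter_subset _ _)
          fun i _ _ => sq_nonneg _

lemma PosSemidef.trace_pow_two_sq_le {A : Matrix n n ℝ} (hA : A.PosSemidef) :
    (A ^ 2).trace ^ 2 ≤ A.trace * (A ^ 3).trace := by
  rw [hA.1.trace_eq_sum_eigenvalues, hA.1.trace_pow_eq_sum_eigenvalues_pow,
    hA.1.trace_pow_eq_sum_eigenvalues_pow]
  simp only [RCLike.ofReal_real_eq_id, id]
  set μ := hA.1.eigenvalues
  have hμ : ∀ i, 0 ≤ μ i := hA.eigenvalues_nonneg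
  calc (∑ i, μ i ^ 2) ^ 2 = (∑ i, √(μ i) * (√(μ i) * μ i)) ^ 2 := by
        simp only [← mul_assoc, Real.mul_self_sqrt (hμ _), sq]
    _ ≤ (∑ i, √(μ i) ^ 2) * ∑ i, (√(μ i) * μ i) ^ 2 := Finset.sum_mul_sq_le_sq_mul_sq _ _ _
    _ = (∑ i, μ i) * ∑ i, μ i ^ 3 := by
        simp only [mul_pow, Real.sq_sqrt (hμ _), ← pow_succ']

lemma trace_pow_three_of_diag_eq_of_triangle {R : Type*} [CommRing R] {A : Matrix n n R} {t : R}
    (hdiag : ∀ i, A i i = t)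
    (htri : ∀ i j k, i ≠ j → j ≠ k → i ≠ k → A i j * A j k * A k i = 0) :
    (A ^ 3).trace = 3 * t * (A ^ 2).trace - 2 * Fintype.card n * t ^ 3 := by
  set E := A - scalar n t with hE
  have hEdiag : ∀ i, E i i = 0 := fun i => by simp [hE, hdiag]
  have hEtri : ∀ i j k, E i j * E j k * E k i = 0 := by
    intro i j k
    by_cases hij : i = j
    · simp [hij, hEdiag]
    by_cases hjk : j = k
    · simp [hjk, hEdiag]
    by_cases hik : i = k
    · simp [hik, hEdiag]
    simpa [hE, hij, hjk, Ne.symm hik] using htri i j k hij hjk hik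
  have hE1 : E.trace = 0 := by simp [trace, hEdiag]
  have hE3 : (E ^ 3).trace = 0 := by
    simp only [trace, diag, pow_succ, pow_zero, Matrix.one_mul, mul_apply, Finset.sum_mul]
    simp [hEtri]
  rw [show A = E + t • 1 by simp [hE, smul_one_eq_diagonal]]
  simp only [pow_succ, pow_zero, Matrix.one_mul] at hE3 ⊢
  simp only [add_mul, mul_add, Matrix.smul_mul, Matrix.mul_smul, Matrix.mul_one, Matrix.one_mul,
    smul_smul, trace_add, trace_smul, trace_one, smul_eq_mul, hE1, hE3]
  ring

theorem PosSemidef.card_le_two_mul_rank {A : Matrix n n ℝ} (hA : A.PosSemidef) {t : ℝ} (ht : 0 < t)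
    (hdiag : ∀ i, A i i = t)
    (htri : ∀ i j k, i ≠ j → j ≠ k → i ≠ k → A i j * A j k * A k i = 0) :
    Fintype.card n ≤ 2 * A.rank := by
  have hN : (0 : ℝ) ≤ Fintype.card n := Nat.cast_nonneg _
  have htrace : A.trace = Fintype.card n * t := by simp [trace, hdiag]
  have htrace_sq : (A ^ 2).trace ≤ 2 * Fintype.card n * t ^ 2 := by
    have h := hA.trace_pow_two_sq_le
    rw [htrace, trace_pow_three_of_diag_eq_of_triangle hdiag htri] at h
    nlinarith [mul_nonneg hN (sq_nonneg t)]
  have hrank := hA.1.trace_sq_le_rank_mul_trace_pow_two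
  rw [htrace] at hrank
  have : (Fintype.card n : ℝ) ≤ 2 * A.rank := by
    rcases hN.eq_or_lt with hN0 | hNpos
    · rw [← hN0]; positivity
    have := hrank.trans (mul_le_mul_of_nonneg_left htrace_sq (Nat.cast_nonneg _))
    nlinarith [mul_pos hNpos (pow_pos ht 2)]
  exact_mod_cast this

lemma rank_gram_le_finrank {𝕜 E ι : Type*} [RCLike 𝕜] [NormedAddCommGroup E]
    [InnerProductSpace 𝕜 E] [FiniteDimensional 𝕜 E] [Fintype ι] (v : ι → E) :
    (gram 𝕜 v).rank ≤ finrank 𝕜 E := by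
  rw [gram_eq_conjTranspose_mul (stdOrthonormalBasis 𝕜 E)]
  exact (rank_mul_le_left _ _).trans <| (rank_le_card_width _).trans_eq (Fintype.card_fin _)

end Matrix

theorem Finset.card_le_two_mul_finrank_add_two {E : Type*} [NormedAddCommGroup E]
    [InnerProductSpace ℝ E] [FiniteDimensional ℝ E] {c : ℝ} (hc : c ≤ 0) (S : Finset E)
    (hunit : ∀ v ∈ S, ‖v‖ = 1)
    (hang : ∀ x ∈ S, ∀ y ∈ S, ∀ z ∈ S, x ≠ y → y ≠ z → x ≠ z →
      inner ℝ x y = c ∨ inner ℝ y z = c ∨ inner ℝ x z = c) :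
    S.card ≤ 2 * finrank ℝ E + 2 := by
  classical
  let w : S → WithLp 2 (E × ℝ) := fun x => WithLp.toLp 2 ((x : E), √(-c))
  have hw : ∀ x y, gram ℝ w x y = inner ℝ (x : E) y - c := fun x y => by
    simp [w, WithLp.prod_inner_apply, Real.sq_sqrt (neg_nonneg.2 hc), sub_eq_add_neg]
  have hrank : (gram ℝ w).rank ≤ finrank ℝ E + 1 := by
    refine (rank_gram_le_finrank w).trans_eq ?_
    rw [(WithLp.linearEquiv 2 ℝ (E × ℝ)).finrank_eq, finrank_prod, finrank_self]
  have htri : ∀ x y z, x ≠ y → y ≠ z → x ≠ z →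
      gram ℝ w x y * gram ℝ w y z * gram ℝ w z x = 0 := by
    intro x y z hxy hyz hxz
    simp only [hw]
    rcases hang x x.2 y y.2 z z.2 (Subtype.coe_ne_coe.2 hxy) (Subtype.coe_ne_coe.2 hyz)
      (Subtype.coe_ne_coe.2 hxz) with h | h | h
    · simp [h]
    · simp [h]
    · simp [real_inner_comm, h]
  have hcard := (posSemidef_gram ℝ w).card_le_two_mul_rank (t := 1 - c) (by linarith)
    (fun x => by rw [hw, real_inner_self_eq_norm_sq, hunit _ x.2]; ring) htri
  rw [Fintype.card_coe] at hcard
  omega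

theorem stmt15 (d : ℕ) (α : ℝ) (hα : Real.pi / 2 ≤ α) (hα' : α < Real.pi)
    (c : ℝ) (hc : c = Real.cos α)
    (S : Finset (EuclideanSpace ℝ (Fin d)))
    (hunit : ∀ v ∈ S, ‖v‖ = 1)
    (hang : ∀ x ∈ S, ∀ y ∈ S, ∀ z ∈ S, x ≠ y → y ≠ z → x ≠ z →
      inner ℝ x y = c ∨ inner ℝ y z = c ∨ inner ℝ x z = c) :
    S.card ≤ 2 * d + 2 := by
  have hc0 : c ≤ 0 := hc ▸ Real.cos_nonpos_of_pi_div_two_le_of_le hα (by linarith [Real.pi_pos])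
  simpa using S.card_le_two_mul_finrank_add_two hc0 hunit hang
end

section
/- Let x₁, …, x_m be real numbers and y > 0 with xᵢ ≥ −y for all i and Σxᵢ = (m + l)y for some l ≥ 0. Then Σ xᵢ³ ≥ (m + 3l)y³. -/
theorem stmt16 (m : ℕ) (x : Fin m → ℝ) (y l : ℝ) (hy : 0 < y) (hl : 0 ≤ l)
    (hx : ∀ i, -y ≤ x i) (hsum : ∑ i, x i = (m + l) * y) :
    (m + 3 * l) * y ^ 3 ≤ ∑ i, (x i) ^ 3 := by
  have key : ∀ i : Fin m, 3 * y ^ 2 * x i - 2 * y ^ 3 ≤ (x i) ^ 3 := by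
    intro i
    nlinarith [sq_nonneg (x i - y), hx i, hy.le]
  calc (m + 3 * l) * y ^ 3 = 3 * y ^ 2 * ((m + l) * y) - 2 * y ^ 3 * m := by ring
    _ = ∑ i : Fin m, (3 * y ^ 2 * x i - 2 * y ^ 3) := by
        rw [Finset.sum_sub_distrib, ← Finset.mul_sum, hsum, Finset.sum_const]
        simp; ring
    _ ≤ ∑ i, (x i) ^ 3 := Finset.sum_le_sum fun i _ => key i
end

section
/- If V is an almost-equidistant set in ℝᵈ whose diameter is at least √2, then |V| ≤ 4d + 4. -/
open Finset
local notation "⟪" x ", " y "⟫" => @inner ℝ _ _ x y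



lemma equilateral_card_le {E : Type*} [NormedAddCommGroup E] [InnerProductSpace ℝ E]
    [FiniteDimensional ℝ E] (S : Finset E)
    (h : ∀ x ∈ S, ∀ y ∈ S, x ≠ y → dist x y = 1) :
    S.card ≤ Module.finrank ℝ E + 1 := by
  classical
  rcases S.eq_empty_or_nonempty with hS | ⟨p, hp⟩
  · simp [hS]
  set T := S.erase p with hT
  have hdist : ∀ x : ↥T, ‖(x : E) - p‖ = 1 := by
    rintro ⟨x, hx⟩
    have hxS := Finset.mem_of_mem_erase hx
    have hxp := Finset.ne_of_mem_erase hx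
    simpa [dist_eq_norm] using h x hxS p hp hxp
  have hG : ∀ x y : ↥T, x ≠ y → ⟪(x : E) - p, (y : E) - p⟫ = 1/2 := by
    rintro ⟨x, hx⟩ ⟨y, hy⟩ hxy
    have hxyv : x ≠ y := by simpa [Subtype.ext_iff] using hxy
    have h1 : ‖x - p‖ = 1 := hdist ⟨x, hx⟩
    have h2 : ‖y - p‖ = 1 := hdist ⟨y, hy⟩
    have h3 : ‖(x - p) - (y - p)‖ = 1 := by
      rw [sub_sub_sub_cancel_right]
      simpa [dist_eq_norm] using h x (Finset.mem_of_mem_erase hx) y (Finset.mem_of_mem_erase hy) hxyv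
    have := norm_sub_sq_real (x - p) (y - p)
    rw [h1, h2, h3] at this
    norm_num at this
    linarith
  have hLI : LinearIndependent ℝ (fun x : ↥T => (x : E) - p) := by
    rw [Fintype.linearIndependent_iff]
    intro g hg
    have h0 : ⟪∑ j, g j • ((j : E) - p), ∑ k, g k • ((k : E) - p)⟫ = 0 := by
      rw [hg]; simp
    rw [sum_inner] at h0
    simp_rw [inner_sum, real_inner_smul_left, real_inner_smul_right] at h0
    have hexp : ∀ j k : ↥T, g j * (g k * ⟪(j : E) - p, (k : E) - p⟫)
        = 1/2 * (g j * g k) + (if k = j then 1/2 * (g j * g k) else 0) := by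
      intro j k
      by_cases hjk : k = j
      · subst hjk
        have : ⟪(k : E) - p, (k : E) - p⟫ = 1 := by
          rw [real_inner_self_eq_norm_sq, hdist k]; norm_num
        rw [this]; simp; ring
      · rw [hG j k (fun hq => hjk hq.symm)]
        simp [hjk]; ring
    simp_rw [hexp] at h0
    have hrow : ∀ j : ↥T, ∑ k, (1/2 * (g j * g k) + if k = j then 1/2 * (g j * g k) else 0)
        = 1/2 * (g j * ∑ k, g k) + 1/2 * (g j)^2 := by
      intro j
      rw [Finset.sum_add_distrib, Finset.sum_ite_eq' Finset.univ j
        (fun k => 1/2 * (g j * g k)), ← Finset.mul_sum, ← Finset.mul_sum]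
      simp [sq]
    simp_rw [hrow] at h0
    rw [Finset.sum_add_distrib, ← Finset.mul_sum, ← Finset.mul_sum, ← Finset.sum_mul] at h0
    have hkey : 1/2 * (∑ j, g j)^2 + 1/2 * ∑ j, (g j)^2 = 0 := by
      rw [← h0]; ring
    have h1 : (0:ℝ) ≤ (∑ j, g j)^2 := sq_nonneg _
    have h2 : ∀ j ∈ Finset.univ, (0:ℝ) ≤ (g j)^2 := fun j _ => sq_nonneg _
    have h3 : (0:ℝ) ≤ ∑ j, (g j)^2 := Finset.sum_nonneg h2
    have hsum0 : ∑ j, (g j)^2 = 0 := by linarith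
    intro i
    have := (Finset.sum_eq_zero_iff_of_nonneg h2).1 hsum0 i (Finset.mem_univ i)
    exact pow_eq_zero_iff (by norm_num) |>.1 this
  have hcard := hLI.fintype_card_le_finrank
  rw [Fintype.card_coe] at hcard
  have hT' : T.card = S.card - 1 := Finset.card_erase_of_mem hp
  have hpos : 1 ≤ S.card := Finset.card_pos.mpr ⟨p, hp⟩
  omega



lemma orth_card_le {E : Type*} [NormedAddCommGroup E] [InnerProductSpace ℝ E]
    [FiniteDimensional ℝ E] {ι : Type*} [Fintype ι] [DecidableEq ι] (v : ι → E)
    (hunit : ∀ i, ‖v i‖ = 1)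
    (htri : ∀ i j k : ι, i ≠ j → j ≠ k → i ≠ k →
      ⟪v i, v j⟫ = 0 ∨ ⟪v j, v k⟫ = 0 ∨ ⟪v i, v k⟫ = 0) :
    Fintype.card ι ≤ 2 * Module.finrank ℝ E := by
  classical
  set n := Module.finrank ℝ E with hn
  set N := Fintype.card ι with hNdef
  let b := stdOrthonormalBasis ℝ E
  let c : ι → Fin n → ℝ := fun i a => ⟪v i, b a⟫
  have hPar : ∀ i j : ι, ⟪v i, v j⟫ = ∑ a, c i a * c j a := by
    intro i j
    have := b.sum_inner_mul_inner (v i) (v j)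
    rw [← this]
    refine Finset.sum_congr rfl fun a _ => ?_
    simp only [c]
    congr 1
    exact real_inner_comm _ _
  let P : Fin n → Fin n → ℝ := fun a a' => ∑ i, c i a * c i a'
  have hinner_self : ∀ i, ⟪v i, v i⟫ = 1 := by
    intro i; rw [real_inner_self_eq_norm_sq, hunit i]; norm_num
  have htr : ∑ a, P a a = (N : ℝ) := by
    rw [Finset.sum_comm]
    have : ∀ i : ι, ∑ a, c i a * c i a = 1 := by
      intro i; rw [← hPar i i, hinner_self i]
    simp_rw [this]
    simp [hNdef]
  have hCS : ((N : ℝ))^2 ≤ (n : ℝ) * ∑ a, (P a a)^2 := by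
    have := sq_sum_le_card_mul_sum_sq (s := (Finset.univ : Finset (Fin n))) (f := fun a => P a a)
    rw [htr] at this
    simpa using this
  have hdiag : ∑ a, (P a a)^2 ≤ ∑ a, ∑ a', (P a a')^2 := by
    refine Finset.sum_le_sum fun a _ => ?_
    exact Finset.single_le_sum (f := fun a' => (P a a')^2) (fun a' _ => sq_nonneg _)
      (Finset.mem_univ a)
  have hswap : ∑ a, ∑ a', (P a a')^2 = ∑ i, ∑ j, (⟪v i, v j⟫)^2 := by
    have expand : ∀ a a' : Fin n, (P a a')^2 = ∑ i, ∑ j, (c i a * c j a) * (c i a' * c j a') := by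
      intro a a'
      rw [sq, Finset.sum_mul_sum]
      refine Finset.sum_congr rfl fun i _ => Finset.sum_congr rfl fun j _ => ?_
      ring
    have key : ∀ i j : ι, (⟪v i, v j⟫)^2 = ∑ a, ∑ a', (c i a * c j a) * (c i a' * c j a') := by
      intro i j
      rw [hPar i j, sq, Finset.sum_mul_sum]
    simp_rw [expand]
    calc ∑ a : Fin n, ∑ a' : Fin n, ∑ i : ι, ∑ j : ι, (c i a * c j a) * (c i a' * c j a')
        = ∑ a : Fin n, ∑ i : ι, ∑ a' : Fin n, ∑ j : ι, (c i a * c j a) * (c i a' * c j a') := by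
          exact Finset.sum_congr rfl fun a _ => Finset.sum_comm
      _ = ∑ i : ι, ∑ a : Fin n, ∑ a' : Fin n, ∑ j : ι, (c i a * c j a) * (c i a' * c j a') :=
          Finset.sum_comm
      _ = ∑ i : ι, ∑ a : Fin n, ∑ j : ι, ∑ a' : Fin n, (c i a * c j a) * (c i a' * c j a') := by
          exact Finset.sum_congr rfl fun i _ => Finset.sum_congr rfl fun a _ =>
            Finset.sum_comm
      _ = ∑ i : ι, ∑ j : ι, ∑ a : Fin n, ∑ a' : Fin n, (c i a * c j a) * (c i a' * c j a') := by
          exact Finset.sum_congr rfl fun i _ => Finset.sum_comm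
      _ = ∑ i : ι, ∑ j : ι, (⟪v i, v j⟫)^2 := by
          exact Finset.sum_congr rfl fun i _ => Finset.sum_congr rfl fun j _ => (key i j).symm
  have hBess : ∀ i : ι, ∑ j ∈ Finset.univ.erase i, (⟪v i, v j⟫)^2 ≤ 1 := by
    intro i
    set s : Finset ι := Finset.univ.filter (fun j => j ≠ i ∧ ⟪v i, v j⟫ ≠ 0) with hs
    have hsub : s ⊆ Finset.univ.erase i := by
      intro j hj
      rw [Finset.mem_filter] at hj
      exact Finset.mem_erase.mpr ⟨hj.2.1, Finset.mem_univ j⟩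
    have hON : Orthonormal ℝ (fun j : ↥s => v j) := by
      constructor
      · intro j; exact hunit j
      · rintro ⟨j, hj⟩ ⟨k, hk⟩ hjk
        have hjk' : j ≠ k := by simpa [Subtype.ext_iff] using hjk
        rw [Finset.mem_filter] at hj hk
        rcases htri i j k (fun hq => hj.2.1 hq.symm) hjk' (fun hq => hk.2.1 hq.symm) with
          h1 | h2 | h3
        · exact absurd h1 hj.2.2
        · exact h2
        · exact absurd h3 hk.2.2
    have hB := hON.sum_inner_products_le (𝕜 := ℝ) (v i) (s := (Finset.univ : Finset ↥s))
    have hB' : ∑ j ∈ s, (⟪v i, v j⟫)^2 ≤ 1 := by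
      rw [← Finset.sum_coe_sort s (fun j => (⟪v i, v j⟫)^2)]
      calc ∑ j : ↥s, (⟪v i, v (j : ι)⟫)^2
          = ∑ j : ↥s, ‖⟪v (j : ι), v i⟫‖^2 := by
            refine Finset.sum_congr rfl fun j _ => ?_
            rw [Real.norm_eq_abs, sq_abs, real_inner_comm]
        _ ≤ ‖v i‖^2 := hB
        _ = 1 := by rw [hunit i]; norm_num
    calc ∑ j ∈ Finset.univ.erase i, (⟪v i, v j⟫)^2
        = ∑ j ∈ s, (⟪v i, v j⟫)^2 := by
          refine (Finset.sum_subset hsub ?_).symm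
          intro j hj hjs
          rw [Finset.mem_erase] at hj
          rw [hs, Finset.mem_filter] at hjs
          push_neg at hjs
          rw [hjs (Finset.mem_univ j) hj.1]
          norm_num
      _ ≤ 1 := hB'
  have hfull : ∑ i : ι, ∑ j : ι, (⟪v i, v j⟫)^2 ≤ 2 * (N:ℝ) := by
    have hrow : ∀ i : ι, ∑ j : ι, (⟪v i, v j⟫)^2 ≤ 2 := by
      intro i
      have h2 := hBess i
      calc ∑ j : ι, (⟪v i, v j⟫)^2
          = (⟪v i, v i⟫)^2 + ∑ j ∈ Finset.univ.erase i, (⟪v i, v j⟫)^2 :=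
            (Finset.add_sum_erase _ _ (Finset.mem_univ i)).symm
        _ ≤ 1 + 1 := by rw [hinner_self i, one_pow]; linarith
        _ = 2 := by norm_num
    calc ∑ i : ι, ∑ j : ι, (⟪v i, v j⟫)^2 ≤ ∑ _i : ι, (2:ℝ) :=
        Finset.sum_le_sum fun i _ => hrow i
      _ = 2 * (N:ℝ) := by simp [hNdef, mul_comm]
  have hfin : ((N:ℝ))^2 ≤ (n:ℝ) * (2 * N) := by
    calc ((N:ℝ))^2 ≤ (n : ℝ) * ∑ a, (P a a)^2 := hCS
      _ ≤ (n : ℝ) * ∑ a, ∑ a', (P a a')^2 := by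
          exact mul_le_mul_of_nonneg_left hdiag (by positivity)
      _ = (n : ℝ) * ∑ i, ∑ j, (⟪v i, v j⟫)^2 := by rw [hswap]
      _ ≤ (n : ℝ) * (2 * N) := mul_le_mul_of_nonneg_left hfull (by positivity)
  rcases Nat.eq_zero_or_pos N with h0 | hpos
  · omega
  have hNpos : (0:ℝ) < N := by exact_mod_cast hpos
  have : (N:ℝ) ≤ 2 * n := by nlinarith
  exact_mod_cast this



theorem stmt17 (d : ℕ) (V : Finset (EuclideanSpace ℝ (Fin d)))
    (hae : ∀ x ∈ V, ∀ y ∈ V, ∀ z ∈ V, x ≠ y → y ≠ z → x ≠ z →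
      dist x y = 1 ∨ dist y z = 1 ∨ dist x z = 1)
    (hdiam : ∃ u ∈ V, ∃ v ∈ V, Real.sqrt 2 ≤ dist u v) :
    V.card ≤ 4 * d + 4 := by
  classical
  obtain ⟨u, hu, v, hv, huvd⟩ := hdiam
  set D := dist u v with hD
  have hsqrt2 : (1:ℝ) < Real.sqrt 2 := by
    rw [show (1:ℝ) = Real.sqrt 1 by simp]
    exact Real.sqrt_lt_sqrt (by norm_num) (by norm_num)
  have hD1 : D ≠ 1 := fun h => by rw [h] at huvd; linarith
  have huv : u ≠ v := by
    intro h
    have hD0 : D = 0 := by rw [hD, h, dist_self]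
    linarith
  have hD2 : (2:ℝ) ≤ D^2 := by
    have := pow_le_pow_left₀ (Real.sqrt_nonneg 2) huvd 2
    rwa [Real.sq_sqrt (by norm_num : (0:ℝ) ≤ 2)] at this
  -- partition
  set A := V.filter (fun x => ¬ dist x u = 1) with hA
  set BC := V.filter (fun x => dist x u = 1) with hBC
  set B := BC.filter (fun x => ¬ dist x v = 1) with hB
  set C := BC.filter (fun x => dist x v = 1) with hC
  have hsplit1 : BC.card + A.card = V.card :=
    Finset.card_filter_add_card_filter_not _
  have hsplit2 : C.card + B.card = BC.card :=
    Finset.card_filter_add_card_filter_not _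
  -- A bound
  have hAcard : A.card ≤ d + 2 := by
    have hAeq : ∀ x ∈ A.erase u, ∀ y ∈ A.erase u, x ≠ y → dist x y = 1 := by
      intro x hx y hy hxy
      have hxu := Finset.ne_of_mem_erase hx
      have hyu := Finset.ne_of_mem_erase hy
      have hxA := Finset.mem_of_mem_erase hx
      have hyA := Finset.mem_of_mem_erase hy
      rw [hA, Finset.mem_filter] at hxA hyA
      rcases hae x hxA.1 y hyA.1 u hu hxy hyu hxu with h | h | h
      · exact h
      · exact absurd h hyA.2
      · exact absurd h hxA.2
    have h1 : (A.erase u).card ≤ d + 1 := by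
      have := equilateral_card_le (A.erase u) hAeq
      rwa [finrank_euclideanSpace_fin] at this
    by_cases hmem : u ∈ A
    · have := Finset.card_erase_of_mem hmem
      have hpos : 1 ≤ A.card := Finset.card_pos.mpr ⟨u, hmem⟩
      omega
    · rw [Finset.erase_eq_of_notMem hmem] at h1
      omega
  -- B bound
  have hvnotB : ∀ x ∈ B, x ≠ v := by
    intro x hx h
    rw [hB, Finset.mem_filter, hBC, Finset.mem_filter] at hx
    rw [h] at hx
    exact hD1 (by rw [hD, dist_comm]; exact hx.1.2)
  have huB : u ∉ B := by
    intro h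
    rw [hB, Finset.mem_filter, hBC, Finset.mem_filter, dist_self] at h
    exact one_ne_zero h.1.2.symm
  have hBcard : B.card ≤ d := by
    have hBeq : ∀ x ∈ insert u B, ∀ y ∈ insert u B, x ≠ y → dist x y = 1 := by
      intro x hx y hy hxy
      rcases Finset.mem_insert.mp hx with hxu | hxB <;>
        rcases Finset.mem_insert.mp hy with hyu | hyB
      · exact absurd (hxu.trans hyu.symm) hxy
      · have := hyB
        rw [hB, Finset.mem_filter, hBC, Finset.mem_filter] at this
        rw [hxu, dist_comm]
        exact this.1.2
      · have := hxB
        rw [hB, Finset.mem_filter, hBC, Finset.mem_filter] at this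
        rw [hyu]
        exact this.1.2
      · have hx' := hxB; have hy' := hyB
        rw [hB, Finset.mem_filter, hBC, Finset.mem_filter] at hx' hy'
        rcases hae x hx'.1.1 y hy'.1.1 v hv hxy (hvnotB y hyB) (hvnotB x hxB) with h | h | h
        · exact h
        · exact absurd h hy'.2
        · exact absurd h hx'.2
    have h1 : (insert u B).card ≤ d + 1 := by
      have := equilateral_card_le (insert u B) hBeq
      rwa [finrank_euclideanSpace_fin] at this
    rw [Finset.card_insert_of_notMem huB] at h1
    omega
  -- C bound
  have hCmem : ∀ x ∈ C, x ∈ V ∧ dist x u = 1 ∧ dist x v = 1 := by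
    intro x hx
    rw [hC, Finset.mem_filter, hBC, Finset.mem_filter] at hx
    exact ⟨hx.1.1, hx.1.2, hx.2⟩
  set m : EuclideanSpace ℝ (Fin d) := (2:ℝ)⁻¹ • (u + v) with hm
  have hmu : ‖m - u‖^2 = D^2/4 := by
    have he : m - u = (2:ℝ)⁻¹ • (v - u) := by rw [hm]; module
    rw [he, norm_smul, show ‖v - u‖ = D from by rw [hD, dist_eq_norm, norm_sub_rev]]
    rw [Real.norm_eq_abs]
    rw [abs_of_pos (by norm_num : (0:ℝ) < 2⁻¹)]
    ring
  have hxm : ∀ x, dist x u = 1 → dist x v = 1 → ‖x - m‖^2 = 1 - D^2/4 := by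
    intro x h1 h2
    have hpar := parallelogram_law_with_norm ℝ (x - m) (m - u)
    have e1 : x - m + (m - u) = x - u := by abel
    have e2 : x - m - (m - u) = x - v := by rw [hm]; module
    rw [e1, e2, show ‖x - u‖ = 1 from by rw [← dist_eq_norm]; exact h1,
      show ‖x - v‖ = 1 from by rw [← dist_eq_norm]; exact h2] at hpar
    rw [pow_two] at hmu ⊢
    linarith
  set τ := Real.sqrt (D^2/4 - 1/2) with hτ
  have hτ2 : τ^2 = D^2/4 - 1/2 := Real.sq_sqrt (by linarith)
  let f : EuclideanSpace ℝ (Fin d) → WithLp 2 ((EuclideanSpace ℝ (Fin d)) × ℝ) :=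
    fun x => (WithLp.equiv 2 _).symm (Real.sqrt 2 • (x - m), Real.sqrt 2 * τ)
  have h22 : Real.sqrt 2 * Real.sqrt 2 = 2 := Real.mul_self_sqrt (by norm_num)
  have hfinner : ∀ x y, ⟪f x, f y⟫ = 2 * ⟪x - m, y - m⟫ + 2 * τ^2 := by
    intro x y
    rw [show ⟪f x, f y⟫ = ⟪Real.sqrt 2 • (x - m), Real.sqrt 2 • (y - m)⟫
        + (Real.sqrt 2 * τ) * (Real.sqrt 2 * τ) from rfl]
    rw [real_inner_smul_left, real_inner_smul_right]
    linear_combination (⟪x - m, y - m⟫ + τ * τ) * h22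
  have hfnorm : ∀ x, dist x u = 1 → dist x v = 1 → ‖f x‖ = 1 := by
    intro x h1 h2
    have hsq : ⟪f x, f x⟫ = 1 := by
      rw [hfinner, real_inner_self_eq_norm_sq, hxm x h1 h2, hτ2]
      ring
    have hn2 : ‖f x‖^2 = 1 := by rw [← real_inner_self_eq_norm_sq, hsq]
    calc ‖f x‖ = Real.sqrt (‖f x‖^2) := (Real.sqrt_sq (norm_nonneg _)).symm
      _ = 1 := by rw [hn2, Real.sqrt_one]
  have horth : ∀ x y, dist x u = 1 → dist x v = 1 → dist y u = 1 → dist y v = 1 →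
      dist x y = 1 → ⟪f x, f y⟫ = 0 := by
    intro x y hx1 hx2 hy1 hy2 hxy
    have hxy' : ‖(x - m) - (y - m)‖^2 = 1 := by
      rw [sub_sub_sub_cancel_right, ← dist_eq_norm, hxy]
      norm_num
    have hns := norm_sub_sq_real (x - m) (y - m)
    rw [hxy', hxm x hx1 hx2, hxm y hy1 hy2] at hns
    rw [hfinner, hτ2]
    linarith
  have hCcard : C.card ≤ 2 * d + 2 := by
    haveI : FiniteDimensional ℝ (WithLp 2 ((EuclideanSpace ℝ (Fin d)) × ℝ)) :=
      Module.Finite.equiv (WithLp.linearEquiv 2 ℝ _).symm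
    have hcard := orth_card_le (v := fun x : ↥C => f x.1)
      (fun i => (hCmem i.1 i.2).elim fun _ h => hfnorm i.1 h.1 h.2)
      (by
        intro i j k hij hjk hik
        obtain ⟨hiV, hi1, hi2⟩ := hCmem i.1 i.2
        obtain ⟨hjV, hj1, hj2⟩ := hCmem j.1 j.2
        obtain ⟨hkV, hk1, hk2⟩ := hCmem k.1 k.2
        have hij' : (i:EuclideanSpace ℝ (Fin d)) ≠ j := fun h => hij (Subtype.ext h)
        have hjk' : (j:EuclideanSpace ℝ (Fin d)) ≠ k := fun h => hjk (Subtype.ext h)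
        have hik' : (i:EuclideanSpace ℝ (Fin d)) ≠ k := fun h => hik (Subtype.ext h)
        rcases hae i.1 hiV j.1 hjV k.1 hkV hij' hjk' hik' with h | h | h
        · exact Or.inl (horth i.1 j.1 hi1 hi2 hj1 hj2 h)
        · exact Or.inr (Or.inl (horth j.1 k.1 hj1 hj2 hk1 hk2 h))
        · exact Or.inr (Or.inr (horth i.1 k.1 hi1 hi2 hk1 hk2 h)))
    have hfr : Module.finrank ℝ (WithLp 2 ((EuclideanSpace ℝ (Fin d)) × ℝ)) = d + 1 := by
      rw [(WithLp.linearEquiv 2 ℝ _).finrank_eq, Module.finrank_prod,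
        finrank_euclideanSpace_fin, Module.finrank_self]
    rw [hfr, Fintype.card_coe] at hcard
    omega
  omega
end
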